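/- Let μ > 0 and δ̂ > 0. For all x, y ∈ ℝⁿ, |f_μ(y) − f_μ(x) − ⟨∇f_μ(x), y − x⟩| ≤ (1/δ̂)^{(1−ν)/(1+ν)} · (L_ν/μ^{1−ν}) · ‖y − x‖² + δ̂ · L_ν · μ^{1+ν}. -/

import Mathlib

open MeasureTheory Real
open scoped RealInnerProductSpace

noncomputable def kappa (n : ℕ) : ℝ := (2 * Real.pi) ^ ((n : ℝ) / 2)

/-- Gaussian smoothing `f_μ` of `f`. -/
noncomputable def gsmooth {n : ℕ} (f : EuclideanSpace ℝ (Fin n) → ℝ) (μ : ℝ)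
    (x : EuclideanSpace ℝ (Fin n)) : ℝ :=
  (kappa n)⁻¹ * ∫ u : EuclideanSpace ℝ (Fin n), f (x + μ • u) * Real.exp (-‖u‖ ^ 2 / 2)

/-- The gradient of the Gaussian smoothing, written via finite differences:
`∇f_μ(x) = κ⁻¹ ∫ ((f(x+μu) - f(x))/μ) u e^{-‖u‖²/2} du`. Applied to an inexact
oracle `f̃` it gives the smoothed inexact gradient `∇f̃_μ(x, δ)`. -/
noncomputable def gsmoothGrad {n : ℕ} (f : EuclideanSpace ℝ (Fin n) → ℝ) (μ : ℝ)
    (x : EuclideanSpace ℝ (Fin n)) : EuclideanSpace ℝ (Fin n) :=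
  (kappa n)⁻¹ • ∫ u : EuclideanSpace ℝ (Fin n),
    (((f (x + μ • u) - f x) / μ) * Real.exp (-‖u‖ ^ 2 / 2)) • u

/-!
Write `h = y - x`. For a gradient that is `ν`-Hölder with constant `L`, the mean value inequality
gives the pointwise bound `|f (z + h) - f z - ⟪∇f z, h⟫| ≤ L ‖h‖^(1+ν)`, and this bound survives
Gaussian averaging once `gsmoothGrad f μ x` is recognised as the Gaussian average of
`∇f (x + μ u)`. That identification is Stein's identity
`∫ F(u) u e^{-‖u‖²/2} du = ∫ ∇F(u) e^{-‖u‖²/2} du` (Gaussian integration by parts), applied to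
`F u = (f (x + μ u) - f x) / μ`; all integrals exist because `f` grows at most quadratically and
`∇f` at most linearly. Finally, weighted AM-GM with weights `(1 + ν)/2` and `(1 - ν)/2` splits
`L ‖h‖^(1+ν)` into the two terms of the bound.
-/

lemma one_add_pow_mul_exp_neg_sq_le (k : ℕ) {t : ℝ} (ht : 0 ≤ t) :
    (1 + t) ^ k * rexp (-t ^ 2 / 2) ≤ rexp ((k : ℝ) ^ 2) * rexp (-(1 / 4) * t ^ 2) := by
  have h1t : (1 + t) ^ k ≤ rexp (k * t) := by
    rw [Real.exp_nat_mul]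
    gcongr
    linarith [Real.add_one_le_exp t]
  calc (1 + t) ^ k * rexp (-t ^ 2 / 2) ≤ rexp (k * t) * rexp (-t ^ 2 / 2) := by gcongr
    _ = rexp (k ^ 2 - (t / 2 - k) ^ 2 - (1 / 4) * t ^ 2) := by rw [← Real.exp_add]; ring_nf
    _ ≤ rexp ((k : ℝ) ^ 2) * rexp (-(1 / 4) * t ^ 2) := by
        rw [← Real.exp_add]; gcongr; nlinarith [sq_nonneg (t / 2 - k)]

lemma rpow_le_one_add {t ν : ℝ} (ht : 0 ≤ t) (hν0 : 0 ≤ ν) (hν1 : ν ≤ 1) : t ^ ν ≤ 1 + t := by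
  rcases le_total t 1 with h | h
  · linarith [Real.rpow_le_one ht h hν0]
  · linarith [Real.rpow_le_self_of_one_le h hν1]

lemma rpow_mul_self_le_sq_div_add {ν d m a : ℝ} (hν0 : 0 ≤ ν) (hν1 : ν ≤ 1) (hd : 0 < d)
    (hm : 0 < m) (ha : 0 ≤ a) :
    a ^ ν * a ≤ (1 / d) ^ ((1 - ν) / (1 + ν)) * a ^ 2 / m ^ (1 - ν) + d * m ^ (1 + ν) := by
  rcases ha.eq_or_lt with rfl | ha
  · rw [mul_zero]; positivity
  set p₁ := (1 / d) ^ ((1 - ν) / (1 + ν)) * a ^ 2 / m ^ (1 - ν)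
  set p₂ := d * m ^ (1 + ν)
  have hp₁ : 0 < p₁ := by positivity
  have hp₂ : 0 < p₂ := by positivity
  have hprod : p₁ ^ ((1 + ν) / 2) * p₂ ^ ((1 - ν) / 2) = a ^ ν * a := by
    have hlog₁ : Real.log p₁ = -((1 - ν) / (1 + ν)) * Real.log d + 2 * Real.log a -
        (1 - ν) * Real.log m := by
      simp only [p₁]
      rw [Real.log_div (by positivity) (by positivity),
        Real.log_mul (by positivity) (by positivity), Real.log_rpow (by positivity),
        Real.log_rpow hm, Real.log_pow, one_div, Real.log_inv]
      push_cast
      ring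
    have hlog₂ : Real.log p₂ = Real.log d + (1 + ν) * Real.log m := by
      rw [Real.log_mul hd.ne' (by positivity), Real.log_rpow hm]
    rw [Real.rpow_def_of_pos hp₁, Real.rpow_def_of_pos hp₂, ← Real.exp_add,
      ← Real.rpow_add_one ha.ne', Real.rpow_def_of_pos ha, hlog₁, hlog₂]
    congr 1
    field_simp
    ring
  calc a ^ ν * a = p₁ ^ ((1 + ν) / 2) * p₂ ^ ((1 - ν) / 2) := hprod.symm
    _ ≤ (1 + ν) / 2 * p₁ + (1 - ν) / 2 * p₂ :=
        Real.geom_mean_le_arith_mean2_weighted (by linarith) (by linarith) hp₁.le hp₂.le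
          (by ring)
    _ ≤ p₁ + p₂ := by nlinarith

section HolderGradient

variable {H : Type*} [NormedAddCommGroup H] [InnerProductSpace ℝ H] [CompleteSpace H]
  {f : H → ℝ} {ν L : ℝ}

lemma abs_sub_sub_inner_gradient_le (hf : Differentiable ℝ f)
    (hH : ∀ x y, ‖gradient f y - gradient f x‖ ≤ L * ‖y - x‖ ^ ν) (hν : 0 ≤ ν) (hL : 0 ≤ L)
    (x h : H) : |f (x + h) - f x - ⟪gradient f x, h⟫| ≤ L * ‖h‖ ^ ν * ‖h‖ := by
  have hbound : ∀ w ∈ segment ℝ x (x + h), ‖fderiv ℝ f w - fderiv ℝ f x‖ ≤ L * ‖h‖ ^ ν := by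
    intro w hw
    rw [← toDual_gradient, ← toDual_gradient, ← map_sub, LinearIsometryEquiv.norm_map]
    calc ‖gradient f w - gradient f x‖ ≤ L * ‖w - x‖ ^ ν := hH x w
      _ ≤ L * ‖h‖ ^ ν := by
          have := norm_sub_le_of_mem_segment hw
          rw [add_sub_cancel_left] at this
          gcongr
  have := (convex_segment x (x + h)).norm_image_sub_le_of_norm_fderiv_le' (fun w _ => hf w)
    hbound (left_mem_segment ℝ _ _) (right_mem_segment ℝ _ _)
  simpa [inner_gradient_left] using this

lemma norm_gradient_add_le (hH : ∀ x y, ‖gradient f y - gradient f x‖ ≤ L * ‖y - x‖ ^ ν)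
    (hν0 : 0 ≤ ν) (hν1 : ν ≤ 1) (hL : 0 ≤ L) (x w : H) :
    ‖gradient f (x + w)‖ ≤ (‖gradient f x‖ + L) * (1 + ‖w‖) := by
  have hxw := hH x (x + w)
  rw [add_sub_cancel_left] at hxw
  have hw := rpow_le_one_add (norm_nonneg w) hν0 hν1
  calc ‖gradient f (x + w)‖ ≤ ‖gradient f x‖ + ‖gradient f (x + w) - gradient f x‖ :=
        norm_le_norm_add_norm_sub' _ _
    _ ≤ ‖gradient f x‖ + L * (1 + ‖w‖) := by gcongr; exact hxw.trans (by gcongr)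
    _ ≤ (‖gradient f x‖ + L) * (1 + ‖w‖) := by
        nlinarith [norm_nonneg (gradient f x), norm_nonneg w]

lemma abs_apply_add_sub_apply_le (hf : Differentiable ℝ f)
    (hH : ∀ x y, ‖gradient f y - gradient f x‖ ≤ L * ‖y - x‖ ^ ν)
    (hν0 : 0 ≤ ν) (hν1 : ν ≤ 1) (hL : 0 ≤ L) (x w : H) :
    |f (x + w) - f x| ≤ (‖gradient f x‖ + L) * (1 + ‖w‖) ^ 2 := by
  have hrem := abs_sub_sub_inner_gradient_le hf hH hν0 hL x w
  have hw := rpow_le_one_add (norm_nonneg w) hν0 hν1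
  have hcs := abs_real_inner_le_norm (gradient f x) w
  have hLw : L * ‖w‖ ^ ν * ‖w‖ ≤ L * (1 + ‖w‖) * ‖w‖ := by gcongr
  have hpoly : ‖gradient f x‖ * ‖w‖ + L * (1 + ‖w‖) * ‖w‖ ≤
      (‖gradient f x‖ + L) * (1 + ‖w‖) ^ 2 := by
    have hw0 := norm_nonneg w
    nlinarith [mul_nonneg (norm_nonneg (gradient f x)) (by positivity : 0 ≤ 1 + ‖w‖ + ‖w‖ ^ 2),
      mul_nonneg hL (by positivity : 0 ≤ 1 + ‖w‖)]
  calc |f (x + w) - f x| ≤ |⟪gradient f x, w⟫| + |f (x + w) - f x - ⟪gradient f x, w⟫| :=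
        (abs_add_le _ _).trans_eq' (by ring_nf)
    _ ≤ (‖gradient f x‖ + L) * (1 + ‖w‖) ^ 2 := by linarith

lemma abs_apply_add_le (hf : Differentiable ℝ f)
    (hH : ∀ x y, ‖gradient f y - gradient f x‖ ≤ L * ‖y - x‖ ^ ν)
    (hν0 : 0 ≤ ν) (hν1 : ν ≤ 1) (hL : 0 ≤ L) (x w : H) :
    |f (x + w)| ≤ (|f x| + ‖gradient f x‖ + L) * (1 + ‖w‖) ^ 2 := by
  have := abs_apply_add_sub_apply_le hf hH hν0 hν1 hL x w
  have h1 : 1 ≤ (1 + ‖w‖) ^ 2 := one_le_pow₀ (by linarith [norm_nonneg w])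
  have h2 := abs_sub_abs_le_abs_sub (f (x + w)) (f x)
  nlinarith [abs_nonneg (f x)]

end HolderGradient

lemma hasFDerivAt_comp_add_smul_sub_div {E : Type*} [NormedAddCommGroup E] [NormedSpace ℝ E]
    {f : E → ℝ} (hf : Differentiable ℝ f) {μ : ℝ} (hμ : μ ≠ 0) (x u : E) :
    HasFDerivAt (fun u => (f (x + μ • u) - f x) / μ) (fderiv ℝ f (x + μ • u)) u := by
  have h := (((hf (x + μ • u)).hasFDerivAt.comp u
    (((hasFDerivAt_id u).const_smul μ).const_add x)).sub_const (f x)).mul_const μ⁻¹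
  have hfun : (fun u => (f (x + μ • u) - f x) / μ) =
      fun u => ((f ∘ fun u => x + (μ • ContinuousLinearMap.id ℝ E) u) u - f x) * μ⁻¹ := by
    funext u; simp [div_eq_mul_inv]
  rw [hfun]
  refine h.congr_fderiv ?_
  ext v
  simp [hμ]

section Gaussian

variable {V : Type*} [NormedAddCommGroup V] [InnerProductSpace ℝ V]

lemma hasFDerivAt_exp_neg_sq_norm_div_two (u : V) :
    HasFDerivAt (fun u : V => rexp (-‖u‖ ^ 2 / 2)) (-rexp (-‖u‖ ^ 2 / 2) • innerSL ℝ u) u := by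
  have hφ : (fun u : V => rexp (-‖u‖ ^ 2 / 2)) = fun u => rexp (-(1 / 2) * ‖u‖ ^ 2) := by
    funext u; ring_nf
  rw [hφ]
  convert ((hasStrictFDerivAt_norm_sq u).hasFDerivAt.const_mul (-(1 / 2))).exp using 1
  ext h
  simp only [smul_apply, coe_innerSL_apply, smul_eq_mul, nsmul_eq_mul]
  ring_nf

lemma one_add_norm_smul_le (μ : ℝ) (u : V) : 1 + ‖μ • u‖ ≤ (1 + |μ|) * (1 + ‖u‖) := by
  rw [norm_smul, Real.norm_eq_abs]
  nlinarith [abs_nonneg μ, norm_nonneg u]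

variable [FiniteDimensional ℝ V] [MeasurableSpace V] [BorelSpace V]

lemma integral_exp_neg_sq_norm_div_two :
    ∫ u : V, rexp (-‖u‖ ^ 2 / 2) = (2 * π) ^ ((Module.finrank ℝ V : ℝ) / 2) := by
  have h := GaussianFourier.integral_rexp_neg_mul_sq_norm (V := V) (b := 1 / 2) (by norm_num)
  rw [show π / (1 / 2) = 2 * π by ring] at h
  rw [← h]
  congr with u
  ring_nf

lemma integrable_exp_neg_mul_sq_norm {b : ℝ} (hb : 0 < b) :
    Integrable (fun u : V => rexp (-b * ‖u‖ ^ 2)) := by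
  refine Integrable.of_integral_ne_zero ?_
  rw [GaussianFourier.integral_rexp_neg_mul_sq_norm hb]
  positivity

lemma integrable_one_add_norm_pow_mul_exp_neg_sq_norm (k : ℕ) :
    Integrable (fun u : V => (1 + ‖u‖) ^ k * rexp (-‖u‖ ^ 2 / 2)) := by
  refine ((integrable_exp_neg_mul_sq_norm (V := V) (b := 1 / 4) (by norm_num)).const_mul
    (rexp ((k : ℝ) ^ 2))).mono' (by fun_prop) (ae_of_all _ fun u => ?_)
  rw [Real.norm_of_nonneg (by positivity)]
  exact one_add_pow_mul_exp_neg_sq_le k (norm_nonneg u)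

lemma integrable_of_norm_le_one_add_norm_pow_mul_exp {G : Type*} [NormedAddCommGroup G]
    {F : V → G} (hF : AEStronglyMeasurable F) (C : ℝ) (k : ℕ)
    (hFC : ∀ u, ‖F u‖ ≤ C * ((1 + ‖u‖) ^ k * rexp (-‖u‖ ^ 2 / 2))) : Integrable F :=
  ((integrable_one_add_norm_pow_mul_exp_neg_sq_norm k).const_mul C).mono' hF (ae_of_all _ hFC)

theorem integral_mul_exp_neg_sq_norm_mul_inner {F : V → ℝ} (hF : Differentiable ℝ F)
    {C₀ C₁ : ℝ} {k₀ k₁ : ℕ} (hF₀ : ∀ u, |F u| ≤ C₀ * (1 + ‖u‖) ^ k₀)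
    (hF₁ : ∀ u, ‖fderiv ℝ F u‖ ≤ C₁ * (1 + ‖u‖) ^ k₁) (h : V) :
    ∫ u, F u * rexp (-‖u‖ ^ 2 / 2) * ⟪u, h⟫ = ∫ u, fderiv ℝ F u h * rexp (-‖u‖ ^ 2 / 2) := by
  set φ : V → ℝ := fun u => rexp (-‖u‖ ^ 2 / 2)
  have hφ' : ∀ u, fderiv ℝ φ u h = -(φ u * ⟪u, h⟫) := fun u => by
    rw [(hasFDerivAt_exp_neg_sq_norm_div_two u).fderiv]
    simp [φ]
  have hφd : Differentiable ℝ φ := fun u =>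
    (hasFDerivAt_exp_neg_sq_norm_div_two u).differentiableAt
  have hFc : Continuous F := hF.continuous
  have hibp := integral_mul_fderiv_eq_neg_fderiv_mul_of_integrable (μ := volume) (f := F)
    (g := φ) (v := h) ?_ ?_ ?_ (fun u _ => hF u) (fun u _ => hφd u)
  · simp only [hφ', mul_neg, integral_neg, neg_inj] at hibp
    simpa only [mul_assoc] using hibp
  · refine integrable_of_norm_le_one_add_norm_pow_mul_exp
      ((measurable_fderiv_apply_const ℝ F h).aestronglyMeasurable.mul (by fun_prop))
      (C₁ * ‖h‖) k₁ fun u => ?_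
    rw [norm_mul, Real.norm_of_nonneg (by positivity : 0 ≤ φ u)]
    calc ‖fderiv ℝ F u h‖ * φ u ≤ (C₁ * (1 + ‖u‖) ^ k₁ * ‖h‖) * φ u := by
          gcongr; exact (ContinuousLinearMap.le_opNorm _ _).trans (by gcongr; exact hF₁ u)
      _ = C₁ * ‖h‖ * ((1 + ‖u‖) ^ k₁ * φ u) := by ring
  · simp only [hφ']
    refine integrable_of_norm_le_one_add_norm_pow_mul_exp (by fun_prop) (C₀ * ‖h‖) (k₀ + 1)
      fun u => ?_
    rw [norm_mul, norm_neg, norm_mul, Real.norm_of_nonneg (by positivity : 0 ≤ φ u),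
      Real.norm_eq_abs]
    calc |F u| * (φ u * ‖⟪u, h⟫‖) ≤ (C₀ * (1 + ‖u‖) ^ k₀) * (φ u * ((1 + ‖u‖) * ‖h‖)) := by
          have hin : ‖⟪u, h⟫‖ ≤ (1 + ‖u‖) * ‖h‖ :=
            (norm_inner_le_norm u h).trans (by gcongr; linarith)
          exact mul_le_mul (hF₀ u) (by gcongr) (by positivity) ((abs_nonneg _).trans (hF₀ u))
      _ = C₀ * ‖h‖ * ((1 + ‖u‖) ^ (k₀ + 1) * φ u) := by ring
  · refine integrable_of_norm_le_one_add_norm_pow_mul_exp (by fun_prop) C₀ k₀ fun u => ?_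
    rw [norm_mul, Real.norm_of_nonneg (by positivity : 0 ≤ φ u), Real.norm_eq_abs, ← mul_assoc]
    gcongr
    exact hF₀ u

lemma integrable_comp_add_smul_mul_exp_neg_sq_norm {g : V → ℝ} (hg : Measurable g) {C : ℝ}
    {k : ℕ} (x : V) (μ : ℝ) (hgC : ∀ w, |g (x + w)| ≤ C * (1 + ‖w‖) ^ k) :
    Integrable (fun u => g (x + μ • u) * rexp (-‖u‖ ^ 2 / 2)) := by
  have hC : 0 ≤ C := by simpa using (abs_nonneg _).trans (hgC 0)
  refine integrable_of_norm_le_one_add_norm_pow_mul_exp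
    ((hg.comp (by fun_prop)).aestronglyMeasurable.mul (by fun_prop)) (C * (1 + |μ|) ^ k) k
    fun u => ?_
  rw [norm_mul, Real.norm_of_nonneg (Real.exp_nonneg _), Real.norm_eq_abs]
  calc |g (x + μ • u)| * rexp (-‖u‖ ^ 2 / 2)
      ≤ C * ((1 + |μ|) * (1 + ‖u‖)) ^ k * rexp (-‖u‖ ^ 2 / 2) := by
        gcongr
        exact (hgC _).trans (by gcongr; exact one_add_norm_smul_le μ u)
    _ = C * (1 + |μ|) ^ k * ((1 + ‖u‖) ^ k * rexp (-‖u‖ ^ 2 / 2)) := by rw [mul_pow]; ring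

end Gaussian

section Smoothing

variable {n : ℕ} {f : EuclideanSpace ℝ (Fin n) → ℝ} {ν L μ : ℝ}

lemma kappa_eq_integral : kappa n = ∫ u : EuclideanSpace ℝ (Fin n), rexp (-‖u‖ ^ 2 / 2) := by
  rw [integral_exp_neg_sq_norm_div_two, finrank_euclideanSpace_fin, kappa]

lemma inner_gsmoothGrad (hf : Differentiable ℝ f)
    (hH : ∀ x y, ‖gradient f y - gradient f x‖ ≤ L * ‖y - x‖ ^ ν)
    (hν0 : 0 ≤ ν) (hν1 : ν ≤ 1) (hL : 0 ≤ L) (hμ : 0 < μ) (x h : EuclideanSpace ℝ (Fin n)) :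
    ⟪gsmoothGrad f μ x, h⟫ =
      (kappa n)⁻¹ * ∫ u, ⟪gradient f (x + μ • u), h⟫ * rexp (-‖u‖ ^ 2 / 2) := by
  set F : EuclideanSpace ℝ (Fin n) → ℝ := fun u => (f (x + μ • u) - f x) / μ
  have hF' : ∀ u, fderiv ℝ F u = fderiv ℝ f (x + μ • u) := fun u =>
    (hasFDerivAt_comp_add_smul_sub_div hf hμ.ne' x u).fderiv
  have hF : Differentiable ℝ F := fun u =>
    (hasFDerivAt_comp_add_smul_sub_div hf hμ.ne' x u).differentiableAt
  have hsmul : ∀ u : EuclideanSpace ℝ (Fin n), 1 + ‖μ • u‖ ≤ (1 + μ) * (1 + ‖u‖) := fun u => by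
    simpa [abs_of_pos hμ] using one_add_norm_smul_le μ u
  have hF₀ : ∀ u, |F u| ≤ (‖gradient f x‖ + L) * (1 + μ) ^ 2 / μ * (1 + ‖u‖) ^ 2 := by
    intro u
    rw [abs_div, abs_of_pos hμ]
    calc |f (x + μ • u) - f x| / μ ≤ (‖gradient f x‖ + L) * (1 + ‖μ • u‖) ^ 2 / μ := by
          gcongr; exact abs_apply_add_sub_apply_le hf hH hν0 hν1 hL x _
      _ ≤ (‖gradient f x‖ + L) * ((1 + μ) * (1 + ‖u‖)) ^ 2 / μ := by gcongr; exact hsmul u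
      _ = (‖gradient f x‖ + L) * (1 + μ) ^ 2 / μ * (1 + ‖u‖) ^ 2 := by ring
  have hF₁ : ∀ u, ‖fderiv ℝ F u‖ ≤ (‖gradient f x‖ + L) * (1 + μ) * (1 + ‖u‖) ^ 1 := by
    intro u
    rw [hF', ← toDual_gradient, LinearIsometryEquiv.norm_map, pow_one, mul_assoc]
    exact (norm_gradient_add_le hH hν0 hν1 hL x (μ • u)).trans (by gcongr; exact hsmul u)
  have hint : Integrable (fun u => (F u * rexp (-‖u‖ ^ 2 / 2)) • u) := by
    have hFc : Continuous F := hF.continuous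
    refine integrable_of_norm_le_one_add_norm_pow_mul_exp (by fun_prop)
      ((‖gradient f x‖ + L) * (1 + μ) ^ 2 / μ) 3 fun u => ?_
    rw [norm_smul, norm_mul, Real.norm_of_nonneg (Real.exp_nonneg _), Real.norm_eq_abs]
    calc |F u| * rexp (-‖u‖ ^ 2 / 2) * ‖u‖
        ≤ (‖gradient f x‖ + L) * (1 + μ) ^ 2 / μ * (1 + ‖u‖) ^ 2 * rexp (-‖u‖ ^ 2 / 2)
          * (1 + ‖u‖) := by gcongr; exacts [hF₀ u, by linarith]
      _ = _ := by ring
  rw [gsmoothGrad, real_inner_smul_left, real_inner_comm, ← integral_inner hint]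
  congr 1
  calc ∫ u, ⟪h, (F u * rexp (-‖u‖ ^ 2 / 2)) • u⟫ = ∫ u, F u * rexp (-‖u‖ ^ 2 / 2) * ⟪u, h⟫ := by
        congr 1; funext u; rw [real_inner_smul_right, real_inner_comm]
    _ = ∫ u, ⟪gradient f (x + μ • u), h⟫ * rexp (-‖u‖ ^ 2 / 2) := by
        rw [integral_mul_exp_neg_sq_norm_mul_inner hF hF₀ hF₁ h]
        simp only [hF', inner_gradient_left]

lemma gsmooth_add_sub_sub_inner_eq (hf : Differentiable ℝ f)
    (hH : ∀ x y, ‖gradient f y - gradient f x‖ ≤ L * ‖y - x‖ ^ ν)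
    (hν0 : 0 ≤ ν) (hν1 : ν ≤ 1) (hL : 0 ≤ L) (hμ : 0 < μ) (x h : EuclideanSpace ℝ (Fin n)) :
    gsmooth f μ (x + h) - gsmooth f μ x - ⟪gsmoothGrad f μ x, h⟫ =
      (kappa n)⁻¹ * ∫ u, (f (x + μ • u + h) - f (x + μ • u) - ⟪gradient f (x + μ • u), h⟫) *
        rexp (-‖u‖ ^ 2 / 2) := by
  have hfm : Measurable f := hf.continuous.measurable
  have hshift := integrable_comp_add_smul_mul_exp_neg_sq_norm hfm (x + h) μ
    (abs_apply_add_le hf hH hν0 hν1 hL (x + h))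
  have hbase := integrable_comp_add_smul_mul_exp_neg_sq_norm hfm x μ
    (abs_apply_add_le hf hH hν0 hν1 hL x)
  have hgrad := integrable_comp_add_smul_mul_exp_neg_sq_norm
    (g := fun z => ⟪gradient f z, h⟫) (by simpa using measurable_fderiv_apply_const ℝ f h) x μ
    (C := ‖h‖ * (‖gradient f x‖ + L)) (k := 1) fun w => by
      rw [pow_one, mul_assoc, mul_comm ‖h‖]
      exact (abs_real_inner_le_norm _ _).trans
        (by gcongr; exact norm_gradient_add_le hH hν0 hν1 hL x w)
  have hdiff : Integrable (fun u => f (x + h + μ • u) * rexp (-‖u‖ ^ 2 / 2) -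
      f (x + μ • u) * rexp (-‖u‖ ^ 2 / 2)) := hshift.sub hbase
  rw [gsmooth, gsmooth, inner_gsmoothGrad hf hH hν0 hν1 hL hμ, ← mul_sub, ← mul_sub,
    ← integral_sub hshift hbase, ← integral_sub hdiff hgrad]
  congr 2 with u
  simp only [add_right_comm x h]
  ring

lemma abs_gsmooth_sub_sub_inner_le (hf : Differentiable ℝ f)
    (hH : ∀ x y, ‖gradient f y - gradient f x‖ ≤ L * ‖y - x‖ ^ ν)
    (hν0 : 0 ≤ ν) (hν1 : ν ≤ 1) (hL : 0 ≤ L) (hμ : 0 < μ) (x y : EuclideanSpace ℝ (Fin n)) :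
    |gsmooth f μ y - gsmooth f μ x - ⟪gsmoothGrad f μ x, y - x⟫| ≤
      L * ‖y - x‖ ^ ν * ‖y - x‖ := by
  have hκ : 0 < kappa n := by rw [kappa]; positivity
  obtain ⟨h, rfl⟩ : ∃ h, y = x + h := ⟨y - x, by abel⟩
  rw [add_sub_cancel_left, gsmooth_add_sub_sub_inner_eq hf hH hν0 hν1 hL hμ, abs_mul,
    abs_inv, abs_of_pos hκ, inv_mul_le_iff₀ hκ, kappa_eq_integral, ← Real.norm_eq_abs,
    ← integral_mul_const]
  have hφ : Integrable fun u : EuclideanSpace ℝ (Fin n) => rexp (-‖u‖ ^ 2 / 2) :=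
    Integrable.of_integral_ne_zero (kappa_eq_integral ▸ hκ.ne')
  refine norm_integral_le_of_norm_le (hφ.mul_const _) (ae_of_all _ fun u => ?_)
  rw [norm_mul, Real.norm_of_nonneg (Real.exp_nonneg _), Real.norm_eq_abs, mul_comm]
  gcongr
  exact abs_sub_sub_inner_gradient_le hf hH hν0 hL _ h

end Smoothing

theorem smoothed_quadratic_upper_bound_with_slack_general {n : ℕ}
    (f : EuclideanSpace ℝ (Fin n) → ℝ) (ν Lν μ dhat : ℝ)
    (hν0 : 0 ≤ ν) (hν1 : ν ≤ 1) (hL : 0 ≤ Lν)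
    (hdiff : Differentiable ℝ f)
    (hHolder : ∀ x y : EuclideanSpace ℝ (Fin n),
      ‖gradient f y - gradient f x‖ ≤ Lν * ‖y - x‖ ^ ν)
    (hμ : 0 < μ) (hdhat : 0 < dhat) (x y : EuclideanSpace ℝ (Fin n)) :
    |gsmooth f μ y - gsmooth f μ x - ⟪gsmoothGrad f μ x, y - x⟫| ≤
      (1 / dhat) ^ ((1 - ν) / (1 + ν)) * (Lν / μ ^ (1 - ν)) * ‖y - x‖ ^ 2
        + dhat * Lν * μ ^ (1 + ν) := by
  have hsmooth := abs_gsmooth_sub_sub_inner_le hdiff hHolder hν0 hν1 hL hμ x y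
  have hyoung := rpow_mul_self_le_sq_div_add hν0 hν1 hdhat hμ (norm_nonneg (y - x))
  calc |gsmooth f μ y - gsmooth f μ x - ⟪gsmoothGrad f μ x, y - x⟫|
      ≤ Lν * (‖y - x‖ ^ ν * ‖y - x‖) := by rw [← mul_assoc]; exact hsmooth
    _ ≤ Lν * ((1 / dhat) ^ ((1 - ν) / (1 + ν)) * ‖y - x‖ ^ 2 / μ ^ (1 - ν)
          + dhat * μ ^ (1 + ν)) := by gcongr
    _ = (1 / dhat) ^ ((1 - ν) / (1 + ν)) * (Lν / μ ^ (1 - ν)) * ‖y - x‖ ^ 2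
          + dhat * Lν * μ ^ (1 + ν) := by ring

/-- Lemma 2.2, second choice of constants: for any `δ̂ > 0`,
`|f_μ(y) − f_μ(x) − ⟨∇f_μ(x), y−x⟩| ≤
  (1/δ̂)^{(1−ν)/(1+ν)} (L_ν/μ^{1−ν}) ‖y−x‖² + δ̂ L_ν μ^{1+ν}`. -/
theorem smoothed_quadratic_upper_bound_with_slack {n : ℕ} (hn : 1 ≤ n)
    (f : EuclideanSpace ℝ (Fin n) → ℝ) (ν Lν μ dhat : ℝ)
    (hν0 : 0 ≤ ν) (hν1 : ν ≤ 1) (hL : 0 ≤ Lν)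
    (hdiff : Differentiable ℝ f)
    (hHolder : ∀ x y : EuclideanSpace ℝ (Fin n),
      ‖gradient f y - gradient f x‖ ≤ Lν * ‖y - x‖ ^ ν)
    (hμ : 0 < μ) (hdhat : 0 < dhat) (x y : EuclideanSpace ℝ (Fin n)) :
    |gsmooth f μ y - gsmooth f μ x - ⟪gsmoothGrad f μ x, y - x⟫| ≤
      (1 / dhat) ^ ((1 - ν) / (1 + ν)) * (Lν / μ ^ (1 - ν)) * ‖y - x‖ ^ 2
        + dhat * Lν * μ ^ (1 + ν) :=
  smoothed_quadratic_upper_bound_with_slack_general f ν Lν μ dhat hν0 hν1 hL hdiff hHolder hμ hdhat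
    x y
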